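/- (Dynamic-range lemma) If x is K-sparse with support T, |x_i| ≥ |x_j|/γ for all i,j ∈ T, |T∩Λ^k| = l, and Φ satisfies RIP of order K with constant δ_K, then ‖Φ_{T∖Λ^k} x_{T∖Λ^k}‖₂ > √((K-l)(1-δ_K)/(K(1+δ_K))) · ‖Φ_T x_T‖₂ / γ. -/

import Mathlib

/-!
Let `u` be `x_T` with the entries in `Λ` set to zero, so that `Φ_{T∖Λ} x_{T∖Λ} = Φ_T u`, and let
`μ = min_{i ∈ T} |x_i|`. Then `‖u‖² ≥ (K-l) μ²` and `‖x_T‖² ≤ K γ² μ²`, which together with the two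
RIP bounds give
`K (1+δ) γ² ‖Φ_T u‖² ≥ K (1+δ) γ² (1-δ) ‖u‖² ≥ (K-l) (1-δ) (1+δ) ‖x_T‖² ≥ (K-l) (1-δ) ‖Φ_T x_T‖²`.
The chain is strict: otherwise the lower RIP bound is attained at `u` and the upper one at `x_T`,
making them eigenvectors of `Φ_Tᵀ Φ_T` for the distinct eigenvalues `1-δ` and `1+δ`, hence
orthogonal, whereas `⟨u, x_T⟩ = ‖u‖² > 0`.
-/
open Matrix BigOperators Finset

/-- squared Euclidean norm -/
noncomputable def n2sq {α : Type*} [Fintype α] (v : α → ℝ) : ℝ := ∑ i, (v i)^2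

/-- Euclidean norm -/
noncomputable def n2 {α : Type*} [Fintype α] (v : α → ℝ) : ℝ := Real.sqrt (n2sq v)

/-- sup norm -/
noncomputable def ninf {α : Type*} [Fintype α] (v : α → ℝ) : ℝ := ⨆ i, |v i|

/-- dot product -/
def dot {α : Type*} [Fintype α] (u v : α → ℝ) : ℝ := ∑ i, u i * v i

/-- column submatrix indexed by a finite index set -/
noncomputable def subCols {m n : ℕ} (Φ : Matrix (Fin m) (Fin n) ℝ) (I : Finset (Fin n)) :
    Matrix (Fin m) {j // j ∈ I} ℝ := Matrix.of fun i j => Φ i j.1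

/-- restriction of a vector to an index set -/
def restrict {n : ℕ} (x : Fin n → ℝ) (I : Finset (Fin n)) : {j // j ∈ I} → ℝ :=
  fun j => x j.1

/-- Moore–Penrose pseudoinverse (full column rank case) -/
noncomputable def pinv {m n : ℕ} (Φ : Matrix (Fin m) (Fin n) ℝ) (I : Finset (Fin n)) :
    Matrix {j // j ∈ I} (Fin m) ℝ :=
  ((subCols Φ I)ᵀ * subCols Φ I)⁻¹ * (subCols Φ I)ᵀ

/-- orthogonal projector onto the column span of `Φ_I` -/
noncomputable def proj {m n : ℕ} (Φ : Matrix (Fin m) (Fin n) ℝ) (I : Finset (Fin n)) :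
    Matrix (Fin m) (Fin m) ℝ := subCols Φ I * pinv Φ I

/-- projector onto the orthogonal complement of the column span of `Φ_I` -/
noncomputable def projPerp {m n : ℕ} (Φ : Matrix (Fin m) (Fin n) ℝ) (I : Finset (Fin n)) :
    Matrix (Fin m) (Fin m) ℝ := 1 - proj Φ I

/-- restricted isometry property of order `K` with constant `δ` -/
def RIP {m n : ℕ} (Φ : Matrix (Fin m) (Fin n) ℝ) (K : ℕ) (δ : ℝ) : Prop :=
  ∀ I : Finset (Fin n), I.card ≤ K → ∀ q : {j // j ∈ I} → ℝ,
    (1 - δ) * n2sq q ≤ n2sq ((subCols Φ I).mulVec q) ∧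
    n2sq ((subCols Φ I).mulVec q) ≤ (1 + δ) * n2sq q

section Quadratic

variable {ι α : Type*} [Fintype ι] [Fintype α]

lemma n2sq_nonneg (v : α → ℝ) : 0 ≤ n2sq v :=
  sum_nonneg fun _ _ => sq_nonneg _

lemma dot_comm (u v : α → ℝ) : dot u v = dot v u := by
  simp only [dot, mul_comm]

lemma n2sq_add_smul (p q : α → ℝ) (t : ℝ) :
    n2sq (p + t • q) = n2sq p + 2 * t * dot p q + t ^ 2 * n2sq q := by
  simp only [n2sq, dot, Pi.add_apply, Pi.smul_apply, smul_eq_mul, mul_sum, ← sum_add_distrib]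
  exact sum_congr rfl fun _ _ => by ring

lemma eq_zero_of_forall_nonneg_mul_sq_add_mul {a b : ℝ} (h : ∀ t : ℝ, 0 ≤ a * t ^ 2 + b * t) :
    b = 0 := by
  by_contra hb
  have hb2 : 0 < b ^ 2 := by positivity
  have := h (-b / (2 * (|a| + 1)))
  field_simp at this
  nlinarith [mul_pos hb2 (by linarith [le_abs_self a, abs_nonneg a] : 0 < 2 * (|a| + 1) - a)]

lemma n2sq_mulVec_add_smul_sub (M : Matrix ι α ℝ) (c : ℝ) (u w : α → ℝ) (t : ℝ) :
    n2sq (M *ᵥ (u + t • w)) - c * n2sq (u + t • w) =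
      (n2sq (M *ᵥ u) - c * n2sq u) + (n2sq (M *ᵥ w) - c * n2sq w) * t ^ 2 +
        2 * (dot (M *ᵥ u) (M *ᵥ w) - c * dot u w) * t := by
  rw [mulVec_add, mulVec_smul, n2sq_add_smul, n2sq_add_smul]
  ring

lemma dot_mulVec_eq_of_lower_bound_attained {M : Matrix ι α ℝ} {c : ℝ}
    (hlow : ∀ v, c * n2sq v ≤ n2sq (M *ᵥ v)) {u : α → ℝ} (hu : n2sq (M *ᵥ u) = c * n2sq u)
    (w : α → ℝ) : dot (M *ᵥ u) (M *ᵥ w) = c * dot u w := by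
  have := eq_zero_of_forall_nonneg_mul_sq_add_mul
    (a := n2sq (M *ᵥ w) - c * n2sq w) (b := 2 * (dot (M *ᵥ u) (M *ᵥ w) - c * dot u w))
    fun t => by linarith [hlow (u + t • w), n2sq_mulVec_add_smul_sub M c u w t]
  linarith

lemma dot_mulVec_eq_of_upper_bound_attained {M : Matrix ι α ℝ} {c : ℝ}
    (hup : ∀ v, n2sq (M *ᵥ v) ≤ c * n2sq v) {u : α → ℝ} (hu : n2sq (M *ᵥ u) = c * n2sq u)
    (w : α → ℝ) : dot (M *ᵥ u) (M *ᵥ w) = c * dot u w := by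
  have := eq_zero_of_forall_nonneg_mul_sq_add_mul
    (a := c * n2sq w - n2sq (M *ᵥ w)) (b := 2 * (c * dot u w - dot (M *ᵥ u) (M *ᵥ w)))
    fun t => by linarith [hup (u + t • w), n2sq_mulVec_add_smul_sub M c u w t]
  linarith

lemma dot_eq_zero_of_lower_upper_bounds_attained {M : Matrix ι α ℝ} {c₁ c₂ : ℝ} (hc : c₁ ≠ c₂)
    (hlow : ∀ v, c₁ * n2sq v ≤ n2sq (M *ᵥ v)) (hup : ∀ v, n2sq (M *ᵥ v) ≤ c₂ * n2sq v)
    {u v : α → ℝ} (hu : n2sq (M *ᵥ u) = c₁ * n2sq u) (hv : n2sq (M *ᵥ v) = c₂ * n2sq v) :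
    dot u v = 0 := by
  have h₁ := dot_mulVec_eq_of_lower_bound_attained hlow hu v
  have h₂ := dot_mulVec_eq_of_upper_bound_attained hup hv u
  rw [dot_comm (M *ᵥ v), dot_comm v] at h₂
  exact (mul_eq_zero.mp (by linarith : (c₁ - c₂) * dot u v = 0)).resolve_left (sub_ne_zero.mpr hc)

end Quadratic

lemma card_mul_sq_le_sum_sq {ι : Type*} {S : Finset ι} {f : ι → ℝ} {μ : ℝ} (hμ : 0 ≤ μ)
    (h : ∀ j ∈ S, μ ≤ |f j|) : S.card * μ ^ 2 ≤ ∑ j ∈ S, f j ^ 2 := by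
  rw [← nsmul_eq_mul]
  exact card_nsmul_le_sum _ _ _ fun j hj => by
    simpa only [sq_abs] using pow_le_pow_left₀ hμ (h j hj) 2

lemma sum_sq_le_card_mul_sq {ι : Type*} {S : Finset ι} {f : ι → ℝ} {M : ℝ}
    (h : ∀ j ∈ S, |f j| ≤ M) : ∑ j ∈ S, f j ^ 2 ≤ S.card * M ^ 2 := by
  rw [← nsmul_eq_mul]
  exact sum_le_card_nsmul _ _ _ fun j hj => by
    simpa only [sq_abs] using pow_le_pow_left₀ (abs_nonneg _) (h j hj) 2

section Restrict

variable {m n : ℕ}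

lemma n2sq_restrict (x : Fin n → ℝ) (I : Finset (Fin n)) :
    n2sq (restrict x I) = ∑ j ∈ I, x j ^ 2 :=
  sum_coe_sort I fun j => x j ^ 2

lemma dot_restrict (x y : Fin n → ℝ) (I : Finset (Fin n)) :
    dot (restrict x I) (restrict y I) = ∑ j ∈ I, x j * y j :=
  sum_coe_sort I fun j => x j * y j

lemma subCols_mulVec_restrict_of_subset (Φ : Matrix (Fin m) (Fin n) ℝ) (x : Fin n → ℝ)
    {S T : Finset (Fin n)} (hST : S ⊆ T) :
    subCols Φ S *ᵥ restrict x S =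
      subCols Φ T *ᵥ restrict (fun j => if j ∈ S then x j else 0) T := by
  ext i
  simp only [mulVec, dotProduct, subCols, _root_.restrict, of_apply, mul_ite, mul_zero]
  rw [sum_coe_sort S fun j => Φ i j * x j,
    sum_coe_sort T fun j => if j ∈ S then Φ i j * x j else 0, sum_ite_mem, inter_eq_right.mpr hST]

lemma n2sq_restrict_ite_mem (x : Fin n → ℝ) {S T : Finset (Fin n)} (hST : S ⊆ T) :
    n2sq (restrict (fun j => if j ∈ S then x j else 0) T) = ∑ j ∈ S, x j ^ 2 := by
  simp only [n2sq_restrict, ite_pow, zero_pow two_ne_zero]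
  rw [sum_ite_mem, inter_eq_right.mpr hST]

lemma dot_restrict_ite_mem (x : Fin n → ℝ) (S T : Finset (Fin n)) :
    dot (restrict (fun j => if j ∈ S then x j else 0) T) (restrict x T) =
      n2sq (restrict (fun j => if j ∈ S then x j else 0) T) := by
  rw [dot_restrict, n2sq_restrict]
  exact sum_congr rfl fun j _ => by split_ifs <;> ring

end Restrict

lemma sqrt_ratio_mul_sqrt_div_lt_sqrt {K L δ γ μ a s A B : ℝ} (hL : 0 < L) (hLK : L ≤ K)
    (hδ0 : 0 < δ) (hδ1 : δ < 1) (hγ : 0 < γ) (hB0 : 0 ≤ B) (ha : L * μ ^ 2 ≤ a)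
    (hs : s ≤ K * (γ * μ) ^ 2) (hA : (1 - δ) * a ≤ A) (hB : B ≤ (1 + δ) * s)
    (hstrict : (1 - δ) * a < A ∨ B < (1 + δ) * s) :
    Real.sqrt (L * (1 - δ) / (K * (1 + δ))) * Real.sqrt B / γ < Real.sqrt A := by
  have hP : 0 < L * (1 - δ) := mul_pos hL (by linarith)
  have hK : 0 < K * (1 + δ) := mul_pos (by linarith) (by linarith)
  have hQ : 0 < K * (1 + δ) * γ ^ 2 := by positivity
  have hchain : L * (1 - δ) * ((1 + δ) * s) ≤ K * (1 + δ) * γ ^ 2 * ((1 - δ) * a) := by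
    linarith [mul_le_mul_of_nonneg_left hs (mul_pos hP (by linarith : (0:ℝ) < 1 + δ)).le,
      mul_le_mul_of_nonneg_left ha (mul_pos hQ (by linarith : (0:ℝ) < 1 - δ)).le]
  have key : L * (1 - δ) * B < K * (1 + δ) * γ ^ 2 * A := by
    rcases hstrict with h | h
    · linarith [mul_le_mul_of_nonneg_left hB hP.le, mul_lt_mul_of_pos_left h hQ]
    · linarith [mul_lt_mul_of_pos_left h hP, mul_le_mul_of_nonneg_left hA hQ.le]
  rw [← Real.sqrt_mul (div_pos hP hK).le, ← Real.sqrt_sq hγ.le, ← Real.sqrt_div' _ (by positivity)]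
  apply Real.sqrt_lt_sqrt (by positivity)
  rw [div_mul_eq_mul_div, div_div, div_lt_iff₀ (by positivity)]
  linarith

/-- dynamic-range lemma:
`‖Φ_{T∖Λ^k}x_{T∖Λ^k}‖₂ > √((K-l)(1-δ_K)/(K(1+δ_K))) ‖Φ_T x_T‖₂ / γ`. -/
theorem dynamic_range_lemma {m n K l : ℕ} (Φ : Matrix (Fin m) (Fin n) ℝ)
    (x : Fin n → ℝ) (T Λ : Finset (Fin n))
    (hsupp : ∀ j, x j ≠ 0 ↔ j ∈ T) (hT : T.card = K)
    (hl : (T ∩ Λ).card = l) (hlK : l < K)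
    (γ : ℝ) (hγ : 1 ≤ γ) (hdyn : ∀ i ∈ T, ∀ j ∈ T, |x j| ≤ γ * |x i|)
    (δ : ℝ) (hδ0 : 0 < δ) (hδ1 : δ < 1) (hRIP : RIP Φ K δ) :
    n2 ((subCols Φ (T \ Λ)).mulVec (restrict x (T \ Λ)))
      > Real.sqrt ((K - l : ℝ) * (1 - δ) / (K * (1 + δ)))
          * n2 ((subCols Φ T).mulVec (restrict x T)) / γ := by
  obtain ⟨i₀, hi₀, hmin⟩ := T.exists_min_image (fun j => |x j|) (card_pos.mp (by omega))
  have hcard : ((T \ Λ).card : ℝ) = K - l := by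
    rw [← Nat.cast_sub hlK.le, ← hT, ← hl, ← card_sdiff_add_card_inter T Λ, Nat.add_sub_cancel]
  set u := restrict (fun j => if j ∈ T \ Λ then x j else 0) T
  have ha : (K - l : ℝ) * |x i₀| ^ 2 ≤ n2sq u := by
    rw [n2sq_restrict_ite_mem x sdiff_subset, ← hcard]
    exact card_mul_sq_le_sum_sq (abs_nonneg _) fun j hj => hmin j (mem_sdiff.mp hj).1
  have hs : n2sq (restrict x T) ≤ K * (γ * |x i₀|) ^ 2 := by
    rw [n2sq_restrict, ← hT]
    exact sum_sq_le_card_mul_sq (hdyn i₀ hi₀)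
  have hKl : (0 : ℝ) < K - l := sub_pos.mpr (Nat.cast_lt.mpr hlK)
  have hu0 : 0 < n2sq u :=
    (mul_pos hKl (pow_pos (abs_pos.mpr ((hsupp i₀).mpr hi₀)) 2)).trans_le ha
  obtain ⟨hlow, hup⟩ := forall_and.mp (hRIP T hT.le)
  have hstrict : (1 - δ) * n2sq u < n2sq (subCols Φ T *ᵥ u) ∨
      n2sq (subCols Φ T *ᵥ restrict x T) < (1 + δ) * n2sq (restrict x T) := by
    by_contra! h
    have := dot_eq_zero_of_lower_upper_bounds_attained (by linarith) hlow hup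
      (h.1.antisymm (hlow _)) ((hup _).antisymm h.2)
    linarith [dot_restrict_ite_mem x (T \ Λ) T]
  unfold n2
  rw [gt_iff_lt, subCols_mulVec_restrict_of_subset Φ x sdiff_subset]
  exact sqrt_ratio_mul_sqrt_div_lt_sqrt hKl (by linarith [(Nat.cast_nonneg (α := ℝ) l)]) hδ0 hδ1
    (by linarith) (n2sq_nonneg _) ha hs (hlow _) (hup _) hstrict
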